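/- Let n ≥ 0 and let (a_0,…,a_k) be nonnegative integers. For any index i with 1 ≤ i ≤ k−1 such that a_{i-1} ≥ 1 and a_{i+1} ≥ 1, one has Q_n(a_0,…,a_k) = Q_n(a_0,…,a_{i-1} − 1, a_i + 2, a_{i+1} − 1,…,a_k) + Q_n(a_0,…,a_{i-1}, a_i + 1, a_{i+1},…,a_k). -/

import Mathlib

/-!
Let `E h` be the generating series, by length, of Dyck paths of height exactly `h`, and
`C h = E 0 + ⋯ + E (h - 1)` that of paths of height `< h`. The first-return decomposition
`p = U A D B` gives `C (h + 1) = 1 + X² C h C (h + 1)`, and from this recurrence alone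
`E g E (g + 2) = E (g + 1)² + E g E (g + 1) E (g + 2)`. Since `Qx n x a` is the coefficient of
`X ^ (2n)` in `∏ᵢ E (x + i) ^ aᵢ`, multiplying the identity by the remaining factors and summing
over `x` gives the theorem.
-/

/-- A Dyck path: a finite sequence of ±1 steps with all partial sums nonnegative
and total sum zero. -/
def IsDyckPath (p : List ℤ) : Prop :=
  (∀ s ∈ p, s = 1 ∨ s = -1) ∧ (∀ k, 0 ≤ (p.take k).sum) ∧ p.sum = 0

/-- The height of a path: the maximum of its partial sums (0 for the empty path). -/
def pathHeight (p : List ℤ) : ℕ :=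
  Finset.sup (Finset.range (p.length + 1)) (fun k => ((p.take k).sum).toNat)

/-- Super-Catalan numbers `T(m,n) = (2m)!(2n)!/(2·m!·n!·(m+n)!)`, as a rational number. -/
def superCatalan (m n : ℕ) : ℚ :=
  ((2 * m).factorial * (2 * n).factorial : ℚ) /
    (2 * m.factorial * n.factorial * (m + n).factorial)

/-- `G n m k`: the number of `m`-tuples of Dyck paths of total length `2n` all of whose
pairwise height differences are at most `k` (this is `0` when `n < 0`). -/
noncomputable def G (n : ℤ) (m k : ℕ) : ℕ :=
  Nat.card {p : Fin m → List ℤ //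
    (∀ i, IsDyckPath (p i)) ∧
    (∑ i, ((p i).length : ℤ)) = 2 * n ∧
    ∀ i j, |(pathHeight (p i) : ℤ) - (pathHeight (p j) : ℤ)| ≤ (k : ℤ)}

/-- The path-height function `P n [a₁,…,aₘ]`: the number of `m`-tuples of Dyck paths
of total length `2n` whose `i`-th path has height `aᵢ`. -/
noncomputable def P (n : ℤ) (a : List ℕ) : ℕ :=
  Nat.card {p : Fin a.length → List ℤ //
    (∀ i, IsDyckPath (p i)) ∧
    (∑ i, ((p i).length : ℤ)) = 2 * n ∧
    ∀ i, pathHeight (p i) = a.get i}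

/-- `Qx n x [a₀,…,a_k]` is `P n` evaluated at `a₀` copies of `x`, `a₁` copies of `x+1`, …,
`a_k` copies of `x+k`. -/
noncomputable def Qx (n : ℤ) (x : ℕ) (a : List ℕ) : ℕ :=
  P n (a.zipIdx.flatMap fun q => List.replicate q.1 (x + q.2))

/-- The grouped path-height function `Q n a = ∑_{x=0}^∞ Qx n x a`. Whenever some entry
of `a` is positive (as in every application below) all terms with `x > n` vanish, since
a Dyck path of height at least `x` has length at least `2x`; so the infinite sum equals
its truncation at `x = n`. -/
noncomputable def Q (n : ℤ) (a : List ℕ) : ℕ :=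
  ∑ x ∈ Finset.range (n.toNat + 1), Qx n x a

open PowerSeries Finset.HasAntidiagonal

def prefixSums (p : List ℤ) : Set ℤ :=
  Set.range fun k => (p.take k).sum

lemma sum_take_append (A B : List ℤ) (k : ℕ) :
    ((A ++ B).take k).sum = (A.take k).sum + (B.take (k - A.length)).sum := by
  simp [List.take_append]

lemma prefixSums_cons_append {A : List ℤ} (hA : A.sum = 0) (B : List ℤ) :
    prefixSums (1 :: (A ++ -1 :: B)) = (1 + ·) '' prefixSums A ∪ prefixSums B := by
  ext s
  simp only [prefixSums, Set.mem_union, Set.mem_image, Set.mem_range]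
  constructor
  · rintro ⟨_ | k, rfl⟩
    · exact Or.inr ⟨0, by simp⟩
    rcases le_or_gt k A.length with hk | hk
    · exact Or.inl ⟨_, ⟨k, rfl⟩, by simp [sum_take_append, Nat.sub_eq_zero_of_le hk]⟩
    · obtain ⟨j, rfl⟩ := Nat.exists_eq_add_of_lt hk
      refine Or.inr ⟨j, ?_⟩
      simp [sum_take_append, List.take_of_length_le (show A.length ≤ A.length + j + 1 by omega),
        hA, show A.length + j + 1 - A.length = j + 1 by omega]
  · rintro (⟨_, ⟨j, rfl⟩, rfl⟩ | ⟨j, rfl⟩)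
    · refine ⟨min j A.length + 1, ?_⟩
      rw [List.take_succ_cons, List.sum_cons, sum_take_append,
        Nat.sub_eq_zero_of_le (min_le_right _ _), ← List.take_eq_take_min]
      simp
    · refine ⟨A.length + 2 + j, ?_⟩
      rw [show A.length + 2 + j = (A.length + 1 + j) + 1 by omega, List.take_succ_cons,
        List.sum_cons, sum_take_append, List.take_of_length_le (by omega), hA,
        show A.length + 1 + j - A.length = j + 1 by omega]
      simp

lemma isGreatest_prefixSums {p : List ℤ} (hp : ∀ k, 0 ≤ (p.take k).sum) :
    IsGreatest (prefixSums p) (pathHeight p) := by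
  obtain ⟨k, -, hk⟩ := Finset.exists_mem_eq_sup (Finset.range (p.length + 1)) (by simp)
    fun k => ((p.take k).sum).toNat
  refine ⟨⟨k, by rw [pathHeight, hk, Int.toNat_of_nonneg (hp k)]⟩, ?_⟩
  rintro _ ⟨j, rfl⟩
  dsimp only
  rw [List.take_eq_take_min]
  calc ((p.take (min j p.length)).sum) ≤ ((p.take (min j p.length)).sum).toNat :=
        Int.self_le_toNat _
    _ ≤ pathHeight p := by
      exact_mod_cast Finset.le_sup (f := fun k => ((p.take k).sum).toNat)
        (Finset.mem_range.2 (Nat.lt_succ_of_le (min_le_right _ _)))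

section FirstReturn

variable {A B : List ℤ}

lemma IsDyckPath.nil : IsDyckPath [] :=
  ⟨by simp, by simp, by simp⟩

lemma IsDyckPath.cons_append (hA : IsDyckPath A) (hB : IsDyckPath B) :
    IsDyckPath (1 :: (A ++ -1 :: B)) := by
  refine ⟨?_, fun k => ?_, by simp [hA.2.2, hB.2.2]⟩
  · simp only [List.mem_cons, List.mem_append]
    rintro s (rfl | hs | rfl | hs)
    exacts [Or.inl rfl, hA.1 s hs, Or.inr rfl, hB.1 s hs]
  · have hk : ((1 :: (A ++ -1 :: B)).take k).sum ∈ prefixSums (1 :: (A ++ -1 :: B)) := ⟨k, rfl⟩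
    rw [prefixSums_cons_append hA.2.2] at hk
    rcases hk with ⟨_, ⟨j, rfl⟩, hj⟩ | ⟨j, hj⟩
    · linarith [hA.2.1 j]
    · exact hj ▸ hB.2.1 j

lemma pathHeight_cons_append (hA : IsDyckPath A) (hB : IsDyckPath B) :
    pathHeight (1 :: (A ++ -1 :: B)) = max (pathHeight A + 1) (pathHeight B) := by
  have h := isGreatest_prefixSums (hA.cons_append hB).2.1
  rw [prefixSums_cons_append hA.2.2] at h
  have h' := ((monotone_id.const_add 1).map_isGreatest (isGreatest_prefixSums hA.2.1)).union
    (isGreatest_prefixSums hB.2.1)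
  have := h.unique h'
  simp only [id] at this
  omega

/-- Stated for an arbitrary level `r` so that the induction on `q` goes through;
`r = 0` gives the first return of a Dyck path. -/
lemma exists_eq_append_neg_one_of_sum_take {q : List ℤ} (hq : ∀ s ∈ q, s = 1 ∨ s = -1)
    {r k : ℕ} (hk : (q.take k).sum = -(r + 1)) :
    ∃ A B, q = A ++ -1 :: B ∧ (∀ j, -(r : ℤ) ≤ (A.take j).sum) ∧ A.sum = -(r : ℤ) := by
  induction q generalizing r k with
  | nil => simp at hk; omega
  | cons a q ih =>
    obtain ⟨k, rfl⟩ : ∃ k', k = k' + 1 :=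
      Nat.exists_eq_succ_of_ne_zero (by rintro rfl; simp at hk; omega)
    rw [List.take_succ_cons, List.sum_cons] at hk
    have hq' : ∀ s ∈ q, s = 1 ∨ s = -1 := fun s hs => hq s (List.mem_cons_of_mem a hs)
    have prepend : ∀ {r' : ℕ}, (r' : ℤ) = r + a →
        (∃ A B, q = A ++ -1 :: B ∧ (∀ j, -(r' : ℤ) ≤ (A.take j).sum) ∧ A.sum = -(r' : ℤ)) →
        ∃ A B, a :: q = A ++ -1 :: B ∧ (∀ j, -(r : ℤ) ≤ (A.take j).sum) ∧ A.sum = -(r : ℤ) := by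
      rintro r' hr' ⟨A, B, rfl, hA, hAsum⟩
      refine ⟨a :: A, B, rfl, fun j => ?_, by simp [hAsum]; omega⟩
      rcases j with _ | j
      · simp
      · simp only [List.take_succ_cons, List.sum_cons]
        linarith [hA j]
    rcases hq a List.mem_cons_self with rfl | rfl
    · exact prepend (r' := r + 1) (by push_cast; ring) (ih hq' (k := k) (by push_cast; linarith))
    · rcases r with _ | r
      · exact ⟨[], q, rfl, by simp, by simp⟩
      · exact prepend (r' := r) (by push_cast; ring)
          (ih hq' (k := k) (by push_cast at hk; linarith))

lemma IsDyckPath.exists_eq_cons_append {p : List ℤ} (hp : IsDyckPath p) (hne : p ≠ []) :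
    ∃ A B, IsDyckPath A ∧ IsDyckPath B ∧ p = 1 :: (A ++ -1 :: B) := by
  obtain ⟨a, q, rfl⟩ := List.exists_cons_of_ne_nil hne
  obtain rfl : a = 1 := by
    have := hp.2.1 1
    rcases hp.1 a List.mem_cons_self with h | rfl
    · exact h
    · simp at this
  obtain ⟨A, B, rfl, hA, hAsum⟩ := exists_eq_append_neg_one_of_sum_take (r := 0) (k := q.length)
    (fun s hs => hp.1 s (List.mem_cons_of_mem 1 hs))
    (by have := hp.2.2; simp only [List.sum_cons] at this; simp; omega)
  have hAD : IsDyckPath A :=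
    ⟨fun s hs => hp.1 s (by simp [hs]), by simpa using hA, by simpa using hAsum⟩
  refine ⟨A, B, hAD, ⟨fun s hs => hp.1 s (by simp [hs]), fun j => ?_, ?_⟩, rfl⟩
  · have hj : (B.take j).sum ∈ prefixSums (1 :: (A ++ -1 :: B)) := by
      rw [prefixSums_cons_append hAD.2.2]
      exact Or.inr ⟨j, rfl⟩
    obtain ⟨k, hk⟩ := hj
    exact hk ▸ hp.2.1 k
  · have := hp.2.2
    simp [hAD.2.2] at this
    linarith

lemma length_le_of_append_neg_one_eq {A' B' : List ℤ} (hA : A.sum = 0)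
    (hA' : ∀ k, 0 ≤ (A'.take k).sum) (h : A ++ -1 :: B = A' ++ -1 :: B') :
    A'.length ≤ A.length := by
  by_contra! hlt
  have key := congrArg (fun l => (l.take (A.length + 1)).sum) h
  simp only [sum_take_append, List.take_of_length_le (Nat.le_succ A.length), hA,
    Nat.add_sub_cancel_left, Nat.sub_eq_zero_of_le hlt] at key
  have := hA' (A.length + 1)
  simp at key
  linarith

lemma IsDyckPath.append_neg_one_inj {A' B' : List ℤ} (hA : IsDyckPath A) (hA' : IsDyckPath A')
    (h : A ++ -1 :: B = A' ++ -1 :: B') : A = A' ∧ B = B' := by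
  obtain ⟨rfl, hB⟩ := List.append_inj h <| le_antisymm
    (length_le_of_append_neg_one_eq hA'.2.2 hA.2.1 h.symm)
    (length_le_of_append_neg_one_eq hA.2.2 hA'.2.1 h)
  exact ⟨rfl, List.cons_injective hB⟩

end FirstReturn

section GenSeries

variable {α β : Type*}

noncomputable def genSeries (w : α → ℕ) : PowerSeries ℤ :=
  PowerSeries.mk fun m => Nat.card {x // w x = m}

/-- `Nat.card` is `0` on infinite types, so the counting identities below need finite fibres. -/
def HasFiniteFibers (w : α → ℕ) : Prop :=
  ∀ m, Finite {x // w x = m}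

lemma coeff_genSeries (w : α → ℕ) (m : ℕ) :
    coeff m (genSeries w) = Nat.card {x // w x = m} :=
  coeff_mk _ _

variable {w : α → ℕ} {v : β → ℕ}

lemma genSeries_congr (e : α ≃ β) (h : ∀ a, v (e a) = w a) : genSeries v = genSeries w := by
  ext m
  simp only [coeff_genSeries]
  exact_mod_cast (Nat.card_congr (e.subtypeEquiv fun a => by rw [h])).symm

lemma hasFiniteFibers_congr (e : α ≃ β) (h : ∀ a, v (e a) = w a) :
    HasFiniteFibers v ↔ HasFiniteFibers w :=
  forall_congr' fun _ => (Equiv.subtypeEquiv e fun a => by rw [h]).finite_iff.symm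

lemma genSeries_zero [Unique α] : genSeries (fun _ : α => 0) = 1 := by
  ext (_ | m) <;> simp [coeff_genSeries]

lemma genSeries_const_add (k : ℕ) (w : α → ℕ) :
    genSeries (fun x => k + w x) = X ^ k * genSeries w := by
  ext m
  rw [coeff_X_pow_mul', coeff_genSeries]
  split_ifs with hkm
  · rw [coeff_genSeries]
    exact_mod_cast Nat.card_congr (Equiv.subtypeEquivRight fun x => by omega)
  · have : IsEmpty {x // k + w x = m} := ⟨fun x => by omega⟩
    simp

lemma genSeries_sum (h : HasFiniteFibers (Sum.elim w v)) :
    genSeries (Sum.elim w v) = genSeries w + genSeries v := by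
  ext m
  let e : {x // Sum.elim w v x = m} ≃ {a // w a = m} ⊕ {b // v b = m} := Equiv.subtypeSum
  have : Finite ({a // w a = m} ⊕ {b // v b = m}) := have := h m; .of_equiv _ e
  have : Finite {a // w a = m} := Finite.sum_left {b // v b = m}
  have : Finite {b // v b = m} := Finite.sum_right {a // w a = m}
  simp only [map_add, coeff_genSeries]
  exact_mod_cast (Nat.card_congr e).trans Nat.card_sum

def prodFiberEquiv (w : α → ℕ) (v : β → ℕ) (m : ℕ) :
    {x : α × β // w x.1 + v x.2 = m} ≃
      Σ ij : antidiagonal m, {a // w a = ij.1.1} × {b // v b = ij.1.2} where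
  toFun x := ⟨⟨(w x.1.1, v x.1.2), mem_antidiagonal.2 x.2⟩, ⟨x.1.1, rfl⟩, ⟨x.1.2, rfl⟩⟩
  invFun y := ⟨(y.2.1, y.2.2), by rw [y.2.1.2, y.2.2.2]; exact mem_antidiagonal.1 y.1.2⟩
  left_inv _ := rfl
  right_inv := by
    rintro ⟨⟨⟨i, j⟩, h⟩, ⟨a, ha⟩, ⟨b, hb⟩⟩
    dsimp only at ha hb
    subst ha hb
    rfl

lemma HasFiniteFibers.prod (hw : HasFiniteFibers w) (hv : HasFiniteFibers v) :
    HasFiniteFibers fun x : α × β => w x.1 + v x.2 := fun m =>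
  have : ∀ m, Finite {a // w a = m} := hw
  have : ∀ m, Finite {b // v b = m} := hv
  Finite.of_equiv _ (prodFiberEquiv w v m).symm

lemma genSeries_prod (hw : HasFiniteFibers w) (hv : HasFiniteFibers v) :
    genSeries (fun x : α × β => w x.1 + v x.2) = genSeries w * genSeries v := by
  ext m
  have : ∀ m, Finite {a // w a = m} := hw
  have : ∀ m, Finite {b // v b = m} := hv
  rw [coeff_mul, coeff_genSeries, Nat.card_congr (prodFiberEquiv w v m), Nat.card_sigma]
  simp [Nat.card_prod, coeff_genSeries, Finset.sum_attach (antidiagonal m)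
    fun ij => (Nat.card {a // w a = ij.1} : ℤ) * Nat.card {b // v b = ij.2}]

lemma sum_consEquiv {k : ℕ} {α : Fin (k + 1) → Type*} (w : ∀ i, α i → ℕ)
    (y : α 0 × ∀ i : Fin k, α i.succ) :
    ∑ i, w i (Fin.consEquiv α y i) = w 0 y.1 + ∑ i : Fin k, w i.succ (y.2 i) := by
  simp [Fin.sum_univ_succ, Fin.consEquiv]

lemma HasFiniteFibers.pi {k : ℕ} {α : Fin k → Type*} {w : ∀ i, α i → ℕ}
    (hw : ∀ i, HasFiniteFibers (w i)) :
    HasFiniteFibers fun x : ∀ i, α i => ∑ i, w i (x i) := by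
  induction k with
  | zero => exact fun m => Finite.of_subsingleton
  | succ k ih =>
    exact (hasFiniteFibers_congr (Fin.consEquiv α) (sum_consEquiv w)).2
      ((hw 0).prod (ih fun i => hw i.succ))

lemma genSeries_pi {k : ℕ} {α : Fin k → Type*} {w : ∀ i, α i → ℕ}
    (hw : ∀ i, HasFiniteFibers (w i)) :
    genSeries (fun x : ∀ i, α i => ∑ i, w i (x i)) = ∏ i, genSeries (w i) := by
  induction k with
  | zero => simpa using genSeries_zero
  | succ k ih =>
    rw [genSeries_congr (Fin.consEquiv α) (sum_consEquiv w),
      genSeries_prod (hw 0) (HasFiniteFibers.pi fun i => hw i.succ), ih fun i => hw i.succ,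
      Fin.prod_univ_succ]

end GenSeries

lemma finite_setOf_isDyckPath_length (m : ℕ) :
    {p : List ℤ | IsDyckPath p ∧ p.length = m}.Finite := by
  refine ((List.finite_length_eq Bool m).image
    (List.map fun b => if b then (1 : ℤ) else -1)).subset ?_
  rintro p ⟨hp, rfl⟩
  refine ⟨p.map (· = 1), by simp, ?_⟩
  conv_rhs => rw [← List.map_id p]
  rw [List.map_map]
  refine List.map_congr_left fun s hs => ?_
  rcases hp.1 s hs with rfl | rfl <;> simp

lemma hasFiniteFibers_length (R : List ℤ → Prop) :
    HasFiniteFibers fun p : {p // IsDyckPath p ∧ R p} => p.1.length := fun m =>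
  have := (finite_setOf_isDyckPath_length m).to_subtype
  Finite.of_injective (fun x => (⟨x.1.1, x.1.2.1, x.2⟩ : {p | IsDyckPath p ∧ p.length = m}))
    fun _ _ h => by simpa [Subtype.ext_iff] using h

noncomputable def dyckSeries (R : List ℤ → Prop) : PowerSeries ℤ :=
  genSeries fun p : {p // IsDyckPath p ∧ R p} => p.1.length

noncomputable def heightLtSeries (h : ℕ) : PowerSeries ℤ :=
  dyckSeries (pathHeight · < h)

noncomputable def heightEqSeries (h : ℕ) : PowerSeries ℤ :=
  dyckSeries (pathHeight · = h)

lemma heightLtSeries_succ_eq_add (h : ℕ) :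
    heightLtSeries (h + 1) = heightLtSeries h + heightEqSeries h := by
  classical
  let e : {p // IsDyckPath p ∧ pathHeight p < h} ⊕ {p // IsDyckPath p ∧ pathHeight p = h} ≃
      {p // IsDyckPath p ∧ pathHeight p < h + 1} :=
    (subtypeOrEquiv (fun p => IsDyckPath p ∧ pathHeight p < h)
      (fun p => IsDyckPath p ∧ pathHeight p = h)
      (Pi.disjoint_iff.2 fun _ => Prop.disjoint_iff.2 fun ⟨⟨_, hlt⟩, _, heq⟩ => by omega)).symm.trans
        (Equiv.subtypeEquivRight fun p => by rw [← and_or_left, Nat.lt_succ_iff_lt_or_eq])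
  have hw : ∀ x, (e x).1.length = Sum.elim (fun p => p.1.length) (fun p => p.1.length) x := by
    rintro (_ | _) <;> rfl
  rw [heightLtSeries, dyckSeries, genSeries_congr e hw,
    genSeries_sum ((hasFiniteFibers_congr e hw).1 (hasFiniteFibers_length _))]
  rfl

lemma heightLtSeries_succ_eq_one_add (h : ℕ) :
    heightLtSeries (h + 1) = 1 + X ^ 2 * (heightLtSeries h * heightLtSeries (h + 1)) := by
  let f : Unit ⊕ ({A // IsDyckPath A ∧ pathHeight A < h} ×
      {B // IsDyckPath B ∧ pathHeight B < h + 1}) → {p // IsDyckPath p ∧ pathHeight p < h + 1} :=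
    Sum.elim (fun _ => ⟨[], IsDyckPath.nil, by simp [pathHeight]⟩) fun AB =>
      ⟨1 :: (AB.1.1 ++ -1 :: AB.2.1), AB.1.2.1.cons_append AB.2.2.1, by
        have := AB.1.2.2
        have := AB.2.2.2
        rw [pathHeight_cons_append AB.1.2.1 AB.2.2.1]
        omega⟩
  have hf : Function.Bijective f := by
    constructor
    · rintro (⟨⟩ | ⟨⟨A, hA⟩, ⟨B, hB⟩⟩) (⟨⟩ | ⟨⟨A', hA'⟩, ⟨B', hB'⟩⟩) hAB
      · rfl
      · simp [f] at hAB
      · simp [f] at hAB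
      · obtain ⟨rfl, rfl⟩ := hA.1.append_neg_one_inj hA'.1 (by simpa [f] using hAB)
        rfl
    · rintro ⟨p, hp, hph⟩
      rcases eq_or_ne p [] with rfl | hne
      · exact ⟨.inl (), rfl⟩
      · obtain ⟨A, B, hA, hB, rfl⟩ := hp.exists_eq_cons_append hne
        rw [pathHeight_cons_append hA hB] at hph
        exact ⟨.inr (⟨A, hA, by omega⟩, ⟨B, hB, by omega⟩), rfl⟩
  let e := Equiv.ofBijective f hf
  have hw : ∀ x, (e x).1.length =
      Sum.elim (fun _ => 0) (fun AB => 2 + (AB.1.1.length + AB.2.1.length)) x := by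
    rintro (_ | _)
    · rfl
    · simp [e, f]
      ring
  refine (genSeries_congr
    (v := fun p : {p // IsDyckPath p ∧ pathHeight p < h + 1} => p.1.length) e hw).trans ?_
  rw [genSeries_sum ((hasFiniteFibers_congr e hw).1 (hasFiniteFibers_length _)), genSeries_zero,
    genSeries_const_add, genSeries_prod (hasFiniteFibers_length _) (hasFiniteFibers_length _)]
  rfl

lemma splitter_identity {R : Type*} [CommRing R] {t : R} {c e : ℕ → R}
    (hc : ∀ h, c (h + 1) = 1 + t * (c h * c (h + 1))) (he : ∀ h, c (h + 1) = c h + e h)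
    (g : ℕ) : e g * e (g + 2) = e (g + 1) ^ 2 + e g * e (g + 1) * e (g + 2) := by
  have step : ∀ h, e (h + 1) = t * c (h + 1) * c (h + 2) * e h := fun h => by
    linear_combination c (h + 1) * hc (h + 1) - c (h + 2) * hc h - he (h + 1)
      + t * c (h + 1) * c (h + 2) * he h
  have hc3 : c (g + 3) = c (g + 1) + t * c (g + 1) * c (g + 2) * c (g + 3) * e g := by
    linear_combination he (g + 2) + he (g + 1) + step (g + 1) - e (g + 1) * hc (g + 2)
      + c (g + 3) * step g
  rw [step (g + 1), step g]
  linear_combination (t ^ 2 * c (g + 1) * c (g + 2) ^ 2 * e g ^ 2) * hc3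

lemma heightEqSeries_splitter (g : ℕ) :
    heightEqSeries g * heightEqSeries (g + 2) = heightEqSeries (g + 1) ^ 2 +
      heightEqSeries g * heightEqSeries (g + 1) * heightEqSeries (g + 2) :=
  splitter_identity heightLtSeries_succ_eq_one_add heightLtSeries_succ_eq_add g

lemma P_eq_coeff (n : ℕ) (a : List ℕ) :
    (P n a : ℤ) = coeff (2 * n) (a.map heightEqSeries).prod := by
  rw [← Fin.prod_univ_fun_getElem]
  simp only [heightEqSeries, dyckSeries]
  rw [← genSeries_pi fun i => hasFiniteFibers_length _, coeff_genSeries]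
  norm_cast
  exact Nat.card_congr
    { toFun p := ⟨fun i => ⟨p.1 i, p.2.1 i, by simpa using p.2.2.2 i⟩, by exact_mod_cast p.2.2.1⟩
      invFun x := ⟨fun i => (x.1 i).1, fun i => (x.1 i).2.1, by exact_mod_cast x.2,
        fun i => by simpa using (x.1 i).2.2⟩
      left_inv _ := rfl
      right_inv _ := rfl }

noncomputable def groupedSeries (x : ℕ) (a : List ℕ) : PowerSeries ℤ :=
  (a.zipIdx.map fun q => heightEqSeries (x + q.2) ^ q.1).prod

lemma Qx_eq_coeff (n x : ℕ) (a : List ℕ) :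
    (Qx n x a : ℤ) = coeff (2 * n) (groupedSeries x a) := by
  rw [Qx, P_eq_coeff, groupedSeries]
  simp [List.flatMap, List.prod_flatten, Function.comp_def]

lemma groupedSeries_splitter (x : ℕ) (l₁ l₂ : List ℕ) (b c d : ℕ) :
    groupedSeries x (l₁ ++ (b + 1) :: c :: (d + 1) :: l₂) =
      groupedSeries x (l₁ ++ b :: (c + 2) :: d :: l₂) +
        groupedSeries x (l₁ ++ (b + 1) :: (c + 1) :: (d + 1) :: l₂) := by
  simp only [groupedSeries, List.zipIdx_append, List.zipIdx_cons, List.map_append, List.map_cons,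
    List.prod_append, List.prod_cons, zero_add]
  rw [show x + (l₁.length + 1) = x + l₁.length + 1 by ring,
    show x + (l₁.length + 1 + 1) = x + l₁.length + 2 by ring]
  set U := (l₁.zipIdx.map fun q => heightEqSeries (x + q.2) ^ q.1).prod
  set V := ((l₂.zipIdx (l₁.length + 1 + 1 + 1)).map fun q => heightEqSeries (x + q.2) ^ q.1).prod
  set g := x + l₁.length
  linear_combination (U * V * heightEqSeries g ^ b * heightEqSeries (g + 1) ^ c *
    heightEqSeries (g + 2) ^ d) * heightEqSeries_splitter g

/-- For `n ≥ 0` and a tuple `(a₀,…,a_k)` written as `l₁ ++ [b, c, d] ++ l₂`,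
where `b = a_{i-1} ≥ 1`, `c = aᵢ`, `d = a_{i+1} ≥ 1` for an index `i` with `1 ≤ i ≤ k−1`:
`Q_n(a₀,…,a_k) = Q_n(…, a_{i-1}−1, aᵢ+2, a_{i+1}−1, …) + Q_n(…, a_{i-1}, aᵢ+1, a_{i+1}, …)`. -/
theorem grouped_splitter_two (n : ℕ) (l₁ l₂ : List ℕ) (b c d : ℕ)
    (hb : 1 ≤ b) (hd : 1 ≤ d) :
    Q (n : ℤ) (l₁ ++ b :: c :: d :: l₂) =
      Q (n : ℤ) (l₁ ++ (b - 1) :: (c + 2) :: (d - 1) :: l₂)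
        + Q (n : ℤ) (l₁ ++ b :: (c + 1) :: d :: l₂) := by
  obtain ⟨b, rfl⟩ := Nat.exists_eq_add_of_le' hb
  obtain ⟨d, rfl⟩ := Nat.exists_eq_add_of_le' hd
  rw [Q, Q, Q, ← Finset.sum_add_distrib]
  refine Finset.sum_congr rfl fun x _ => ?_
  simp only [Nat.add_sub_cancel]
  zify
  rw [Qx_eq_coeff, Qx_eq_coeff, Qx_eq_coeff, groupedSeries_splitter, map_add]
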